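/- arXiv:cond-mat/0701236 — 2 statements merged into one kernel-verified Lean document; each statement's English description precedes it below -/
import Mathlib

section
/- If x^L = (a/(γk))^(1/(k−1)) > (k−1)/V, then f^L(x^L) ≤ sup_{x ∈ [(k−1)/V, ∞)} f_V(x) ≤ f^U_V(x^U_V). -/
/-!
On `[(k-1)/V, ∞)` every factor `x - j/V` of the product lies between `x - (k-1)/V` and `x`, so
`f^L(x) ≤ f_V(x) ≤ a(k-1)/V + f^L(x - (k-1)/V)`. The relation `a = γ k (x^L)^(k-1)` makes the
tangent line of `γ y^k` at `x^L` have slope `a`, so by convexity (Bernoulli's inequality) `x^L`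
maximises `f^L` on `[0, ∞)`, and the right-hand side is at most `f^U_V(x^U_V)`. Evaluating at
`x^L`, which lies in the interval, gives the lower bound.
-/

open Set Finset

section Tangent

variable {K : Type*} [Field K] [LinearOrder K] [IsStrictOrderedRing K]

lemma pow_add_mul_pow_pred_mul_sub_le_pow {s y : K} (hs : 0 < s) (hy : -s ≤ y) (n : ℕ) :
    s ^ n + n * s ^ (n - 1) * (y - s) ≤ y ^ n := by
  rcases Nat.eq_zero_or_pos n with rfl | hn
  · simp
  have hbern := one_add_mul_le_pow (a := y / s - 1) (by
    rw [le_sub_iff_add_le, le_div_iff₀ hs]; linarith) n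
  rw [add_sub_cancel, div_pow, le_div_iff₀ (pow_pos hs n)] at hbern
  have hpow : s ^ n = s ^ (n - 1) * s := by rw [← pow_succ, Nat.sub_add_cancel hn]
  calc s ^ n + n * s ^ (n - 1) * (y - s) = (1 + n * (y / s - 1)) * s ^ n := by
        rw [hpow]; field_simp
    _ ≤ y ^ n := hbern

lemma mul_sub_mul_pow_le_of_eq_mul_pow_pred {a γ s y : K} {n : ℕ} (hγ : 0 ≤ γ) (hs : 0 < s)
    (hy : -s ≤ y) (ha : a = γ * n * s ^ (n - 1)) :
    a * y - γ * y ^ n ≤ a * s - γ * s ^ n := by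
  have := mul_le_mul_of_nonneg_left (pow_add_mul_pow_pred_mul_sub_le_pow hs hy n) hγ
  rw [ha]
  linarith

end Tangent

section ProdBounds

variable {ι R : Type*} [CommRing R] [PartialOrder R] [IsOrderedRing R] {s : Finset ι}
  {b : ι → R} {c x : R}

lemma pow_card_sub_le_prod_sub (hb : ∀ i ∈ s, b i ≤ c) (hcx : c ≤ x) :
    (x - c) ^ #s ≤ ∏ i ∈ s, (x - b i) := by
  rw [← prod_const]
  exact prod_le_prod (fun _ _ ↦ sub_nonneg.2 hcx) fun i hi ↦ sub_le_sub_left (hb i hi) x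

lemma prod_sub_le_pow_card (hb₀ : ∀ i ∈ s, 0 ≤ b i) (hbx : ∀ i ∈ s, b i ≤ x) :
    ∏ i ∈ s, (x - b i) ≤ x ^ #s := by
  rw [← prod_const]
  exact prod_le_prod (fun i hi ↦ sub_nonneg.2 (hbx i hi)) fun i hi ↦ sub_le_self x (hb₀ i hi)

end ProdBounds

lemma Real.rpow_one_div_natCast_sub_one_pow {b : ℝ} (hb : 0 ≤ b) {n : ℕ} (hn : 1 < n) :
    (b ^ ((1 : ℝ) / (n - 1))) ^ (n - 1) = b := by
  have hcast : ((n : ℝ) - 1) = ((n - 1 : ℕ) : ℝ) := by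
    rw [Nat.cast_sub hn.le, Nat.cast_one]
  rw [hcast, one_div, Real.rpow_inv_natCast_pow hb (by omega)]

lemma natCast_div_mem_Icc_of_mem_range {V : ℝ} (hV : 0 < V) {k j : ℕ} (hj : j ∈ range k) :
    (j : ℝ) / V ∈ Icc 0 ((k - 1) / V) := by
  have : (j : ℝ) + 1 ≤ k := by exact_mod_cast mem_range.1 hj
  exact ⟨by positivity, div_le_div_of_nonneg_right (by linarith) hV.le⟩

theorem stmt4 (a γ V : ℝ) (ha : 0 < a) (hγ : 0 < γ) (hV : 0 < V) (k : ℕ) (hk : 2 ≤ k)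
    (fV : ℝ → ℝ) (hfV : ∀ x, fV x = a * x - γ * ∏ j ∈ Finset.range k, (x - j / V))
    (fL : ℝ → ℝ) (hfL : ∀ x, fL x = a * x - γ * x ^ k)
    (fU : ℝ → ℝ) (hfU : ∀ x, fU x = a * x - γ * (x - (k - 1) / V) ^ k)
    (xL : ℝ) (hxL : xL = (a / (γ * k)) ^ ((1 : ℝ) / (k - 1)))
    (xU : ℝ) (hxU : xU = xL + (k - 1) / V)
    (hbig : (k - 1) / V < xL) :
    fL xL ≤ sSup (fV '' Set.Ici ((k - 1) / V)) ∧
    sSup (fV '' Set.Ici ((k - 1) / V)) ≤ fU xU := by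
  set c : ℝ := ((k : ℝ) - 1) / V
  have hnodes (j) (hj : j ∈ range k) := natCast_div_mem_Icc_of_mem_range hV hj
  have hxL₀ : 0 < xL := (nonempty_Icc.1 ⟨_, hnodes 0 (mem_range.2 (by omega))⟩).trans_lt hbig
  have ha_eq : a = γ * k * xL ^ (k - 1) := by
    rw [hxL, Real.rpow_one_div_natCast_sub_one_pow (by positivity) hk]
    field_simp
  have hfV_le : ∀ x ∈ Ici c, fV x ≤ fU xU := fun x hx ↦ by
    have hprod := mul_le_mul_of_nonneg_left
      (pow_card_sub_le_prod_sub (fun j hj ↦ (hnodes j hj).2) hx) hγ.le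
    have hmax := mul_sub_mul_pow_le_of_eq_mul_pow_pred hγ.le hxL₀
      (by linarith [mem_Ici.1 hx] : -xL ≤ x - c) ha_eq
    rw [card_range] at hprod
    calc fV x ≤ a * (x - c) - γ * (x - c) ^ k + a * c := by
          rw [hfV]; linarith
      _ ≤ a * xL - γ * xL ^ k + a * c := by linarith
      _ = fU xU := by rw [hfU, hxU, add_sub_cancel_right]; ring
  have hfL_le : fL xL ≤ fV xL := by
    have hprod := mul_le_mul_of_nonneg_left
      (prod_sub_le_pow_card (fun j hj ↦ (hnodes j hj).1)
        fun j hj ↦ (hnodes j hj).2.trans hbig.le) hγ.le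
    rw [card_range] at hprod
    rw [hfL, hfV]; linarith
  have hmem : fV xL ∈ fV '' Ici c := mem_image_of_mem fV hbig.le
  have hbound : ∀ z ∈ fV '' Ici c, z ≤ fU xU := forall_mem_image.2 hfV_le
  exact ⟨hfL_le.trans (le_csSup ⟨_, hbound⟩ hmem), csSup_le ⟨_, hmem⟩ hbound⟩
end

section
/- As V → ∞, the supremum over [0,∞) of f_V satisfies limsup_{V→∞} sup_{x ≥ 0} f_V(x) ≤ f^L(x^L) = (a/(kγ))^(1/(k−1)) · a · (k−1)/k, where a = (μ − λ(0))_+. -/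
/-!
All roots `j / V` of the product lie in `[0, c]` with `c = (k - 1) / V`. For `x ≥ c` the product
dominates `(x - c) ^ k`, so `f_V x ≤ a c + max_{y ≥ 0} (a y - γ y ^ k)`; for `x ≤ c` the product
is at most `c ^ k` in absolute value. As `c → 0` these bounds tend to `f^L(x^L)`. The maximum of
`a y - γ y ^ k` comes from the tangent-line inequality `t ^ k + k t ^ (k - 1) (y - t) ≤ y ^ k`
at `t = x^L`, where `a = k γ t ^ (k - 1)`.
-/

open Set Finset Filter Topology

theorem pow_add_mul_pow_sub_one_mul_sub_le_pow {t y : ℝ} (ht : 0 ≤ t) (hy : -t ≤ y) (n : ℕ) :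
    t ^ n + n * t ^ (n - 1) * (y - t) ≤ y ^ n := by
  rcases ht.eq_or_lt with rfl | ht
  · rcases n with _ | _ | n <;> simp
    · positivity
  · have hyt : -1 ≤ y / t := by rw [le_div_iff₀ ht]; linarith
    rcases n with _ | n
    · simp
    calc t ^ (n + 1) + ↑(n + 1) * t ^ (n + 1 - 1) * (y - t)
        = t ^ (n + 1) * (1 + ↑(n + 1) * (y / t - 1)) := by
          rw [Nat.add_sub_cancel]; field_simp; ring
      _ ≤ t ^ (n + 1) * (y / t) ^ (n + 1) := by gcongr; exact one_add_mul_sub_le_pow hyt _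
      _ = y ^ (n + 1) := by rw [← mul_pow, mul_div_cancel₀ _ ht.ne']

theorem mul_sub_mul_pow_le {a γ y : ℝ} {k : ℕ} (ha : 0 ≤ a) (hγ : 0 < γ) (hk : 2 ≤ k)
    (hy : 0 ≤ y) :
    a * y - γ * y ^ k ≤ (a / (k * γ)) ^ ((1 : ℝ) / (k - 1)) * a * (k - 1) / k := by
  have hexp : (1 : ℝ) / (k - 1) = ((k - 1 : ℕ) : ℝ)⁻¹ := by
    rw [Nat.cast_sub (by omega), Nat.cast_one, one_div]
  rw [hexp]
  set t := (a / (k * γ)) ^ ((k - 1 : ℕ) : ℝ)⁻¹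
  have ht : 0 ≤ t := by positivity
  have htk : t ^ (k - 1) = a / (k * γ) :=
    Real.rpow_inv_natCast_pow (by positivity) (by omega)
  have htk' : t ^ k = t * (a / (k * γ)) := by
    rw [← htk, ← pow_succ', Nat.sub_add_cancel (by omega)]
  have htangent := pow_add_mul_pow_sub_one_mul_sub_le_pow ht (by linarith : -t ≤ y) k
  rw [htk, htk'] at htangent
  calc a * y - γ * y ^ k ≤ a * y - γ * (t * (a / (k * γ)) + k * (a / (k * γ)) * (y - t)) := by
        gcongr
    _ = t * a * (k - 1) / k := by field_simp; ring

theorem pow_card_le_prod_sub {ι : Type*} {s : Finset ι} {r : ι → ℝ} {c x : ℝ}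
    (hr : ∀ i ∈ s, r i ≤ c) (hx : c ≤ x) : (x - c) ^ #s ≤ ∏ i ∈ s, (x - r i) := by
  rw [← prod_const]
  exact prod_le_prod (fun _ _ ↦ by linarith) fun i hi ↦ by linarith [hr i hi]

theorem abs_prod_sub_le_pow_card {ι : Type*} {s : Finset ι} {r : ι → ℝ} {c x : ℝ}
    (hr : ∀ i ∈ s, r i ∈ Icc 0 c) (hx : x ∈ Icc 0 c) : |∏ i ∈ s, (x - r i)| ≤ c ^ #s := by
  rw [abs_prod, ← prod_const]
  refine prod_le_prod (fun _ _ ↦ abs_nonneg _) fun i hi ↦ abs_le.2 ?_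
  obtain ⟨hr0, hrc⟩ := hr i hi
  constructor <;> linarith [hx.1, hx.2]

theorem mul_sub_mul_prod_sub_le {ι : Type*} {s : Finset ι} {r : ι → ℝ} {a γ c x : ℝ}
    (ha : 0 ≤ a) (hγ : 0 < γ) (hs : 2 ≤ #s) (hc : 0 ≤ c) (hr : ∀ i ∈ s, r i ∈ Icc 0 c)
    (hx : 0 ≤ x) :
    a * x - γ * ∏ i ∈ s, (x - r i) ≤
      (a / (#s * γ)) ^ ((1 : ℝ) / (#s - 1)) * a * (#s - 1) / #s + a * c + γ * c ^ #s := by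
  rcases le_total x c with hxc | hcx
  · have hM_nonneg := mul_sub_mul_pow_le ha hγ hs le_rfl
    rw [mul_zero, zero_pow (by omega), mul_zero, sub_zero] at hM_nonneg
    have hprod := neg_le_of_abs_le (abs_prod_sub_le_pow_card hr ⟨hx, hxc⟩)
    have : a * x ≤ a * c := by gcongr
    nlinarith [mul_le_mul_of_nonneg_left hprod hγ.le]
  · have hprod := pow_card_le_prod_sub (fun i hi ↦ (hr i hi).2) hcx
    have := mul_sub_mul_pow_le ha hγ hs (sub_nonneg.2 hcx)
    nlinarith [mul_le_mul_of_nonneg_left hprod hγ.le, pow_nonneg hc #s]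

theorem limsup_le_of_eventually_le_of_tendsto {α : Type*} {l : Filter α} [l.NeBot]
    {u v : α → ℝ} {b M : ℝ} (hb : ∀ᶠ x in l, b ≤ u x) (huv : u ≤ᶠ[l] v)
    (hv : Tendsto v l (𝓝 M)) : limsup u l ≤ M :=
  (limsup_le_limsup huv (isBoundedUnder_of_eventually_ge hb).isCoboundedUnder_le
    hv.isBoundedUnder_le).trans_eq hv.limsup_eq

theorem stmt6 (a γ : ℝ) (ha : 0 ≤ a) (hγ : 0 < γ) (k : ℕ) (hk : 2 ≤ k)
    (fV : ℝ → ℝ → ℝ)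
    (hfV : ∀ V x, fV V x = a * x - γ * ∏ j ∈ Finset.range k, (x - j / V)) :
    Filter.limsup (fun V : ℝ => sSup (fV V '' Set.Ici (0 : ℝ))) Filter.atTop ≤
      (a / (k * γ)) ^ ((1 : ℝ) / (k - 1)) * a * (k - 1) / k := by
  set M := (a / (k * γ)) ^ ((1 : ℝ) / (k - 1)) * a * (k - 1) / k
  set c : ℝ → ℝ := fun V ↦ ((k : ℝ) - 1) / V
  have hk' : (1 : ℝ) ≤ k := by exact_mod_cast (by omega : 1 ≤ k)
  have hfV_le : ∀ V > 0, ∀ x ≥ 0, fV V x ≤ M + a * c V + γ * c V ^ k := by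
    intro V hV x hx
    have hroots : ∀ j ∈ range k, (j : ℝ) / V ∈ Icc 0 (c V) := fun j hj ↦
      ⟨by positivity, div_le_div_of_nonneg_right
        (le_sub_iff_add_le.2 (by exact_mod_cast mem_range.1 hj)) hV.le⟩
    rw [hfV]
    simpa only [card_range] using mul_sub_mul_prod_sub_le ha hγ (by simpa using hk)
      (div_nonneg (by linarith) hV.le) hroots hx
  have hfV_zero : ∀ V, fV V 0 = 0 := fun V ↦ by
    rw [hfV, prod_eq_zero (mem_range.2 (by omega : 0 < k)) (by simp)]; ring
  have hc : Tendsto c atTop (𝓝 0) := tendsto_const_nhds.div_atTop tendsto_id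
  refine limsup_le_of_eventually_le_of_tendsto (b := 0) ?_ ?_
    (by simpa [zero_pow (by omega : k ≠ 0)] using
      ((tendsto_const_nhds (x := M)).add (hc.const_mul a)).add ((hc.pow k).const_mul γ))
  · filter_upwards [eventually_gt_atTop 0] with V hV
    exact le_csSup ⟨_, forall_mem_image.2 (hfV_le V hV)⟩ ⟨0, mem_Ici.2 le_rfl, hfV_zero V⟩
  · filter_upwards [eventually_gt_atTop 0] with V hV
    exact csSup_le (nonempty_Ici.image _) (forall_mem_image.2 (hfV_le V hV))
end
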